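/- arXiv:1403.7943 — 4 statements merged into one kernel-verified Lean document; each statement's English description precedes it below -/
import Mathlib

section
/- Let g : [0,1] → ℝ be continuous with g ≥ 0 and g(0) = g(1) = 0. Then the canonical projection p_g : [0,1] → T_g is continuous (with [0,1] carrying its usual topology and T_g the topology of the metric induced by d_g), and the metric space (T_g, d_g) is compact. -/
/-- The minimum of `g` over the interval between `s` and `t`. -/
noncomputable def mg (g : ℝ → ℝ) (s t : ℝ) : ℝ :=
  sInf (g '' Set.Icc (min s t) (max s t))

/-- The pseudo-distance `d_g(s,t) = g(s) + g(t) - 2 m_g(s,t)`. -/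
noncomputable def dg (g : ℝ → ℝ) (s t : ℝ) : ℝ :=
  g s + g t - 2 * mg g s t

/-- If `T` is a metric space together with a surjection `p : [0,1] → T` whose distances are
given by `d_g` (i.e. `T` is the quotient metric space `T_g` and `p` the canonical projection),
then `p` is continuous and `T` is compact. -/
theorem projection_continuous_and_tree_compact
    (g : ℝ → ℝ) (hcont : ContinuousOn g (Set.Icc 0 1))
    (hnonneg : ∀ x ∈ Set.Icc (0:ℝ) 1, 0 ≤ g x)
    (h0 : g 0 = 0) (h1 : g 1 = 0)
    (T : Type*) [MetricSpace T] (p : Set.Icc (0:ℝ) 1 → T)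
    (hsurj : Function.Surjective p)
    (hdist : ∀ s t : Set.Icc (0:ℝ) 1, dist (p s) (p t) = dg g s t) :
    Continuous p ∧ CompactSpace T := by
  have huc : UniformContinuousOn g (Set.Icc 0 1) :=
    isCompact_Icc.uniformContinuousOn_of_continuous hcont
  rw [Metric.uniformContinuousOn_iff] at huc
  have hp : Continuous p := by
    rw [Metric.continuous_iff]
    intro b ε hε
    obtain ⟨δ, hδ, hδ'⟩ := huc (ε / 2) (by positivity)
    refine ⟨δ, hδ, fun a ha => ?_⟩
    rw [hdist]
    obtain ⟨s, hs⟩ := a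
    obtain ⟨t, ht⟩ := b
    simp only [Subtype.dist_eq, Real.dist_eq] at ha ⊢
    have hsub : Set.Icc (min s t) (max s t) ⊆ Set.Icc 0 1 :=
      Set.Icc_subset_Icc (le_min hs.1 ht.1) (max_le hs.2 ht.2)
    obtain ⟨r, hr, hrmin⟩ := isCompact_Icc.exists_isMinOn
      (Set.nonempty_Icc.2 min_le_max) (hcont.mono hsub)
    have hm : mg g s t = g r := IsLeast.csInf_eq ⟨⟨r, hr, rfl⟩, by
      rintro _ ⟨x, hx, rfl⟩; exact hrmin hx⟩
    have habs : max s t - min s t = |s - t| := by rw [abs_sub_comm]; exact max_sub_min_eq_abs s t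
    have hr1 : min s t ≤ r := hr.1
    have hr2 : r ≤ max s t := hr.2
    have hsr : |s - r| < δ := by
      rw [abs_sub_lt_iff]
      constructor <;> [nlinarith [le_max_left s t, abs_nonneg (s - t), le_abs_self (s-t), neg_abs_le (s-t)];
        nlinarith [min_le_left s t, abs_nonneg (s - t), le_abs_self (s-t), neg_abs_le (s-t)]]
    have htr : |t - r| < δ := by
      rw [abs_sub_lt_iff]
      constructor <;> [nlinarith [le_max_right s t, abs_nonneg (s - t), le_abs_self (s-t), neg_abs_le (s-t)];
        nlinarith [min_le_right s t, abs_nonneg (s - t), le_abs_self (s-t), neg_abs_le (s-t)]]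
    have hbs : |g s - g r| < ε / 2 := by
      have := hδ' s hs r (hsub hr) (by rwa [Real.dist_eq])
      rwa [Real.dist_eq] at this
    have hbt : |g t - g r| < ε / 2 := by
      have := hδ' t ht r (hsub hr) (by rwa [Real.dist_eq])
      rwa [Real.dist_eq] at this
    have h1 : g s - g r < ε / 2 := lt_of_le_of_lt (le_abs_self _) hbs
    have h2 : g t - g r < ε / 2 := lt_of_le_of_lt (le_abs_self _) hbt
    rw [dg, hm]
    linarith
  refine ⟨hp, ?_⟩
  have hc : IsCompact (Set.range p) := isCompact_range hp
  rw [Set.range_eq_univ.mpr hsurj] at hc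
  exact ⟨hc⟩
end

section
/- Let g : [0,1] → ℝ be continuous with g ≥ 0 and g(0) = g(1) = 0. Then for every a, b ∈ T_g there exists a unique isometric map f_{a,b} : [0, d_g(a,b)] → T_g (i.e. d_g(f_{a,b}(x), f_{a,b}(y)) = |x − y| for all x, y ∈ [0, d_g(a,b)]) such that f_{a,b}(0) = a and f_{a,b}(d_g(a,b)) = b. -/
/-!
Between `s ≤ t` pick a minimum point `w` of `g` on `[s, t]`. The geodesic from `s` runs down
to `w` and back up to `t`: at descent `x` it sits at the first point after `s` where `g` has
dropped to `g s - x` (symmetrically on the way up). Between two such points `g` is smallest at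
the later one, which makes the path isometric for `dg`.

Uniqueness comes from the four-point condition: `m_g(x, z) ≥ min (m_g(x, y), m_g(y, z))`
makes `dg` 0-hyperbolic, and in a 0-hyperbolic metric space a point `z` with
`d(a, z) + d(z, b) = d(a, b)` is determined by `d(a, z)`.
-/

open Set

section MinDist

variable {g : ℝ → ℝ} {s t w r : ℝ}

lemma mg_eq_sInf_image_uIcc (g : ℝ → ℝ) (s t : ℝ) : mg g s t = sInf (g '' uIcc s t) := rfl

lemma mg_comm (g : ℝ → ℝ) (s t : ℝ) : mg g s t = mg g t s := by
  simp only [mg_eq_sInf_image_uIcc, uIcc_comm]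

lemma mg_eq_of_isMinOn (hw : w ∈ uIcc s t) (hmin : IsMinOn g (uIcc s t) w) : mg g s t = g w :=
  IsLeast.csInf_eq ⟨mem_image_of_mem g hw, by rintro _ ⟨r, hr, rfl⟩; exact hmin hr⟩

lemma mg_le_of_mem_uIcc (hg : ContinuousOn g (uIcc s t)) (hr : r ∈ uIcc s t) : mg g s t ≤ g r := by
  obtain ⟨w, hw, hmin⟩ := isCompact_uIcc.exists_isMinOn nonempty_uIcc hg
  exact (mg_eq_of_isMinOn hw hmin).trans_le (hmin hr)

lemma min_mg_le_mg {I : Set ℝ} [I.OrdConnected] (hg : ContinuousOn g I) {x y z : ℝ}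
    (hx : x ∈ I) (hy : y ∈ I) (hz : z ∈ I) : min (mg g x y) (mg g y z) ≤ mg g x z := by
  obtain ⟨w, hw, hmin⟩ := isCompact_uIcc.exists_isMinOn nonempty_uIcc
    (hg.mono (OrdConnected.uIcc_subset ‹_› hx hz))
  rw [mg_eq_of_isMinOn hw hmin]
  rcases uIcc_subset_uIcc_union_uIcc hw with hw | hw
  · exact min_le_of_left_le (mg_le_of_mem_uIcc (hg.mono (OrdConnected.uIcc_subset ‹_› hx hy)) hw)
  · exact min_le_of_right_le (mg_le_of_mem_uIcc (hg.mono (OrdConnected.uIcc_subset ‹_› hy hz)) hw)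

lemma dg_comm (g : ℝ → ℝ) (s t : ℝ) : dg g s t = dg g t s := by
  rw [dg, dg, mg_comm, add_comm (g s)]

lemma dg_eq_of_isMinOn (hw : w ∈ uIcc s t) (hmin : IsMinOn g (uIcc s t) w) :
    dg g s t = g s + g t - 2 * g w := by
  rw [dg, mg_eq_of_isMinOn hw hmin]

lemma dg_eq_of_isMinOn_of_mem_uIcc {p q : ℝ} (hw : w ∈ uIcc s t) (hmin : IsMinOn g (uIcc s t) w)
    (hp : p ∈ uIcc s w) (hq : q ∈ uIcc t w) : dg g p q = g p + g q - 2 * g w := by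
  have hpq : uIcc p q ⊆ uIcc s t := uIcc_subset_uIcc (uIcc_subset_uIcc_left hw hp)
    (uIcc_comm s t ▸ uIcc_subset_uIcc_left (uIcc_comm s t ▸ hw) hq)
  have hw' : w ∈ uIcc p q := by
    rw [mem_uIcc] at hw hp hq ⊢
    grind
  exact dg_eq_of_isMinOn hw' (hmin.on_subset hpq)

lemma mg_comp_neg (g : ℝ → ℝ) (s t : ℝ) : mg (fun x => g (-x)) s t = mg g (-s) (-t) := by
  rw [mg_eq_sInf_image_uIcc, mg_eq_sInf_image_uIcc, ← image_neg_uIcc, image_image]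

lemma dg_comp_neg (g : ℝ → ℝ) (s t : ℝ) : dg (fun x => g (-x)) s t = dg g (-s) (-t) := by
  rw [dg, dg, mg_comp_neg]

lemma dg_four_point {I : Set ℝ} [I.OrdConnected] (hg : ContinuousOn g I) {s t u v : ℝ}
    (hs : s ∈ I) (ht : t ∈ I) (hu : u ∈ I) (hv : v ∈ I) :
    dg g s t + dg g u v ≤ max (dg g s u + dg g t v) (dg g s v + dg g t u) := by
  have h₁ := min_mg_le_mg hg hs hu ht
  have h₂ := min_mg_le_mg hg hs hv ht
  have h₃ := min_mg_le_mg hg hu hs hv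
  have h₄ := min_mg_le_mg hg hu ht hv
  rw [mg_comm g u t, mg_comm g v t, mg_comm g u s] at *
  simp only [dg, le_max_iff]
  rw [min_le_iff] at h₁ h₂ h₃ h₄
  by_contra! h
  rcases h₁ with h₁ | h₁ <;> rcases h₂ with h₂ | h₂ <;> rcases h₃ with h₃ | h₃ <;>
    rcases h₄ with h₄ | h₄ <;> linarith

end MinDist

/-- Gromov 0-hyperbolicity. -/
def FourPointCondition (T : Type*) [PseudoMetricSpace T] : Prop :=
  ∀ w x y z : T, dist w x + dist y z ≤ max (dist w y + dist x z) (dist w z + dist x y)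

lemma FourPointCondition.of_dg {g : ℝ → ℝ} {I : Set ℝ} [I.OrdConnected] (hg : ContinuousOn g I)
    {T : Type*} [PseudoMetricSpace T] {p : I → T} (hp : Function.Surjective p)
    (hdist : ∀ s t, dist (p s) (p t) = dg g s t) : FourPointCondition T := by
  intro w x y z
  obtain ⟨⟨w, hw⟩, rfl⟩ := hp w
  obtain ⟨⟨x, hx⟩, rfl⟩ := hp x
  obtain ⟨⟨y, hy⟩, rfl⟩ := hp y
  obtain ⟨⟨z, hz⟩, rfl⟩ := hp z
  simp only [hdist]
  exact dg_four_point hg hw hx hy hz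

lemma FourPointCondition.eq_of_dist_eq {T : Type*} [MetricSpace T] (h : FourPointCondition T)
    {a b z z' : T} (hz : dist a z + dist z b = dist a b) (ha : dist a z = dist a z')
    (hb : dist z b = dist z' b) : z = z' := by
  have := h a b z z'
  rw [dist_comm b z', dist_comm b z, ← ha, ← hb, hz, max_self] at this
  exact dist_le_zero.1 (by linarith)

lemma dist_of_isometric_arc {T : Type*} [PseudoMetricSpace T] {a b : T}
    {f : Icc (0:ℝ) (dist a b) → T} (hf : ∀ x y, dist (f x) (f y) = |(x : ℝ) - y|)
    (hf₀ : f ⟨0, le_rfl, dist_nonneg⟩ = a) (hf₁ : f ⟨dist a b, dist_nonneg, le_rfl⟩ = b)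
    (x : Icc (0:ℝ) (dist a b)) : dist a (f x) = x ∧ dist (f x) b = dist a b - x := by
  have h₀ := hf ⟨0, le_rfl, dist_nonneg⟩ x
  have h₁ := hf x ⟨dist a b, dist_nonneg, le_rfl⟩
  rw [hf₀] at h₀
  rw [hf₁] at h₁
  rw [h₀, h₁, zero_sub, abs_neg, abs_of_nonneg x.2.1, abs_sub_comm,
    abs_of_nonneg (sub_nonneg.2 x.2.2)]
  exact ⟨rfl, rfl⟩

lemma FourPointCondition.isometric_arc_unique {T : Type*} [MetricSpace T]
    (h : FourPointCondition T) {a b : T} {f f' : Icc (0:ℝ) (dist a b) → T}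
    (hf : ∀ x y, dist (f x) (f y) = |(x : ℝ) - y|) (hf₀ : f ⟨0, le_rfl, dist_nonneg⟩ = a)
    (hf₁ : f ⟨dist a b, dist_nonneg, le_rfl⟩ = b)
    (hf' : ∀ x y, dist (f' x) (f' y) = |(x : ℝ) - y|) (hf'₀ : f' ⟨0, le_rfl, dist_nonneg⟩ = a)
    (hf'₁ : f' ⟨dist a b, dist_nonneg, le_rfl⟩ = b) : f = f' := by
  funext x
  obtain ⟨ha, hb⟩ := dist_of_isometric_arc hf hf₀ hf₁ x
  obtain ⟨ha', hb'⟩ := dist_of_isometric_arc hf' hf'₀ hf'₁ x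
  exact h.eq_of_dist_eq (by rw [ha, hb]; ring) (ha.trans ha'.symm) (hb.trans hb'.symm)

noncomputable def firstHit (g : ℝ → ℝ) (s w c : ℝ) : ℝ :=
  sInf (Icc s w ∩ g ⁻¹' Iic c)

section FirstHit

variable {g : ℝ → ℝ} {s w c c' r : ℝ}

lemma firstHit_le (hr : r ∈ Icc s w) (hgr : g r ≤ c) : firstHit g s w c ≤ r :=
  csInf_le ⟨s, fun _ hq => hq.1.1⟩ ⟨hr, hgr⟩

variable (hg : ContinuousOn g (Icc s w)) (hsw : s ≤ w)
include hg hsw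

lemma firstHit_mem (hc : g w ≤ c) : firstHit g s w c ∈ Icc s w ∩ g ⁻¹' Iic c :=
  (hg.preimage_isClosed_of_isClosed isClosed_Icc isClosed_Iic).csInf_mem
    ⟨w, ⟨hsw, le_rfl⟩, hc⟩ ⟨s, fun _ hq => hq.1.1⟩

lemma apply_firstHit (hc : c ∈ Icc (g w) (g s)) : g (firstHit g s w c) = c := by
  obtain ⟨⟨hs, hw⟩, hgc⟩ := firstHit_mem hg hsw hc.1
  obtain ⟨r, hr, hgr⟩ :=
    intermediate_value_Icc' hs (hg.mono (Icc_subset_Icc_right hw)) ⟨hgc, hc.2⟩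
  rw [le_antisymm (firstHit_le ⟨hr.1, hr.2.trans hw⟩ hgr.le) hr.2, hgr]

lemma isMinOn_firstHit (hc : c ∈ Icc (g w) (g s)) :
    IsMinOn g (Icc s (firstHit g s w c)) (firstHit g s w c) := by
  refine isMinOn_iff.2 fun r hr => ?_
  rw [apply_firstHit hg hsw hc]
  by_contra! hlt
  have hw := (firstHit_mem hg hsw hc.1).1.2
  have := le_antisymm hr.2 (firstHit_le ⟨hr.1, hr.2.trans hw⟩ hlt.le)
  rw [this, apply_firstHit hg hsw hc] at hlt
  exact lt_irrefl c hlt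

lemma firstHit_anti (hc' : g w ≤ c') (hcc' : c' ≤ c) :
    firstHit g s w c ≤ firstHit g s w c' :=
  let h := firstHit_mem hg hsw hc'
  firstHit_le h.1 (h.2.trans hcc')

lemma dg_firstHit (hc : c ≤ g s) (hc' : g w ≤ c') (hcc' : c' ≤ c) :
    dg g (firstHit g s w c) (firstHit g s w c') = c - c' := by
  have hc'_mem : c' ∈ Icc (g w) (g s) := ⟨hc', hcc'.trans hc⟩
  have hsub : uIcc (firstHit g s w c) (firstHit g s w c') ⊆ Icc s (firstHit g s w c') := by
    rw [uIcc_of_le (firstHit_anti hg hsw hc' hcc')]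
    exact Icc_subset_Icc_left (firstHit_mem hg hsw (hc'.trans hcc')).1.1
  rw [dg_eq_of_isMinOn right_mem_uIcc ((isMinOn_firstHit hg hsw hc'_mem).on_subset hsub),
    apply_firstHit hg hsw ⟨hc'.trans hcc', hc⟩, apply_firstHit hg hsw hc'_mem]
  ring

end FirstHit

/-- Half of a geodesic: from `s` down to a minimum point `w` of `g`, parametrized by the
descent `x` of `g`. -/
structure IsDescentArc (g : ℝ → ℝ) (s w : ℝ) (F : ℝ → ℝ) : Prop where
  mem_uIcc : ∀ x ∈ Icc 0 (g s - g w), F x ∈ uIcc s w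
  apply_eq : ∀ x ∈ Icc 0 (g s - g w), g (F x) = g s - x
  dg_eq : ∀ x ∈ Icc 0 (g s - g w), ∀ y ∈ Icc 0 (g s - g w), dg g (F x) (F y) = |x - y|
  dg_start : dg g (F 0) s = 0
  dg_end : dg g (F (g s - g w)) w = 0

section DescentArc

variable {g : ℝ → ℝ} {s w : ℝ}

lemma isDescentArc_firstHit (hsw : s ≤ w) (hg : ContinuousOn g (Icc s w))
    (hmin : IsMinOn g (Icc s w) w) : IsDescentArc g s w (fun x => firstHit g s w (g s - x)) := by
  have hws : g w ≤ g s := hmin ⟨le_rfl, hsw⟩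
  have hmem : ∀ x ∈ Icc 0 (g s - g w), g s - x ∈ Icc (g w) (g s) := fun x hx =>
    ⟨by linarith [hx.2], by linarith [hx.1]⟩
  refine ⟨fun x hx => ?_, fun x hx => ?_, fun x hx y hy => ?_, ?_, ?_⟩
  · rw [uIcc_of_le hsw]
    exact (firstHit_mem hg hsw (hmem x hx).1).1
  · exact apply_firstHit hg hsw (hmem x hx)
  · rcases le_total x y with hxy | hxy
    · rw [dg_firstHit hg hsw (hmem x hx).2 (hmem y hy).1 (by linarith),
        abs_of_nonpos (by linarith)]
      ring
    · rw [dg_comm, dg_firstHit hg hsw (hmem y hy).2 (hmem x hx).1 (by linarith),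
        abs_of_nonneg (by linarith)]
      ring
  · have hs_mem : g s ∈ Icc (g w) (g s) := ⟨hws, le_rfl⟩
    have hmin_s := isMinOn_firstHit hg hsw hs_mem
    rw [← uIcc_of_ge (firstHit_mem hg hsw hws).1.1] at hmin_s
    rw [sub_zero, dg_eq_of_isMinOn left_mem_uIcc hmin_s, apply_firstHit hg hsw hs_mem]
    ring
  · have hsub : uIcc (firstHit g s w (g w)) w ⊆ Icc s w := by
      rw [uIcc_of_le (firstHit_mem hg hsw le_rfl).1.2]
      exact Icc_subset_Icc_left (firstHit_mem hg hsw le_rfl).1.1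
    rw [sub_sub_cancel, dg_eq_of_isMinOn right_mem_uIcc (hmin.on_subset hsub),
      apply_firstHit hg hsw ⟨le_rfl, hws⟩]
    ring

lemma IsDescentArc.neg {F : ℝ → ℝ} (h : IsDescentArc (fun x => g (-x)) s w F) :
    IsDescentArc g (-s) (-w) (fun x => -F x) where
  mem_uIcc x hx := by
    rw [← image_neg_uIcc]
    exact mem_image_of_mem _ (h.mem_uIcc x hx)
  apply_eq := h.apply_eq
  dg_eq x hx y hy := by rw [← dg_comp_neg]; exact h.dg_eq x hx y hy
  dg_start := by rw [← dg_comp_neg]; simpa using h.dg_start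
  dg_end := by rw [← dg_comp_neg]; simpa using h.dg_end

lemma exists_isDescentArc (hg : ContinuousOn g (uIcc s w)) (hmin : IsMinOn g (uIcc s w) w) :
    ∃ F, IsDescentArc g s w F := by
  rcases le_total s w with hsw | hws
  · rw [uIcc_of_le hsw] at hg hmin
    exact ⟨_, isDescentArc_firstHit hsw hg hmin⟩
  · have hmaps : MapsTo (fun x : ℝ => -x) (Icc (-s) (-w)) (uIcc s w) := fun x hx => by
      rw [uIcc_of_ge hws]
      exact ⟨le_neg.1 hx.2, neg_le.1 hx.1⟩
    have hg' : ContinuousOn (fun x => g (-x)) (Icc (-s) (-w)) := hg.comp continuousOn_neg hmaps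
    have hmin' : IsMinOn (fun x => g (-x)) (Icc (-s) (-w)) (-w) :=
      isMinOn_iff.2 fun x hx => by
        simpa only [neg_neg] using isMinOn_iff.1 hmin _ (hmaps hx)
    have := (isDescentArc_firstHit (neg_le_neg hws) hg' hmin').neg
    rw [neg_neg, neg_neg] at this
    exact ⟨_, this⟩

end DescentArc

lemma exists_dg_isometric_arc {g : ℝ → ℝ} {s t : ℝ} (hg : ContinuousOn g (uIcc s t)) :
    ∃ F : ℝ → ℝ, (∀ x ∈ Icc 0 (dg g s t), F x ∈ uIcc s t) ∧
      (∀ x ∈ Icc 0 (dg g s t), ∀ y ∈ Icc 0 (dg g s t), dg g (F x) (F y) = |x - y|) ∧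
      dg g (F 0) s = 0 ∧ dg g (F (dg g s t)) t = 0 := by
  obtain ⟨w, hw, hmin⟩ := isCompact_uIcc.exists_isMinOn nonempty_uIcc hg
  have hsw : uIcc s w ⊆ uIcc s t := uIcc_subset_uIcc_left hw
  have htw : uIcc t w ⊆ uIcc s t := uIcc_comm s t ▸ uIcc_subset_uIcc_left (uIcc_comm s t ▸ hw)
  obtain ⟨F, hF⟩ := exists_isDescentArc (hg.mono hsw) (hmin.on_subset hsw)
  obtain ⟨G, hG⟩ := exists_isDescentArc (hg.mono htw) (hmin.on_subset htw)
  have hcross : ∀ p ∈ uIcc s w, ∀ q ∈ uIcc t w, dg g p q = g p + g q - 2 * g w :=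
    fun p hp q hq => dg_eq_of_isMinOn_of_mem_uIcc hw hmin hp hq
  set a := g s - g w
  set b := g t - g w
  have ha : 0 ≤ a := sub_nonneg.2 (isMinOn_iff.1 hmin s left_mem_uIcc)
  have hb : 0 ≤ b := sub_nonneg.2 (isMinOn_iff.1 hmin t right_mem_uIcc)
  have hd : dg g s t = a + b := by rw [dg_eq_of_isMinOn hw hmin]; ring
  have hGmem : ∀ x ∈ Icc 0 (dg g s t), ¬x ≤ a → dg g s t - x ∈ Icc 0 b := fun x hx hxa =>
    ⟨sub_nonneg.2 hx.2, by rw [hd]; linarith⟩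
  refine ⟨fun x => if x ≤ a then F x else G (dg g s t - x), fun x hx => ?_,
    fun x hx y hy => ?_, ?_, ?_⟩ <;> dsimp only
  · split_ifs with hxa
    · exact hsw (hF.mem_uIcc x ⟨hx.1, hxa⟩)
    · exact htw (hG.mem_uIcc _ (hGmem x hx hxa))
  · split_ifs with hxa hya hya
    · exact hF.dg_eq x ⟨hx.1, hxa⟩ y ⟨hy.1, hya⟩
    · rw [hcross _ (hF.mem_uIcc x ⟨hx.1, hxa⟩) _ (hG.mem_uIcc _ (hGmem y hy hya)),
        hF.apply_eq x ⟨hx.1, hxa⟩, hG.apply_eq _ (hGmem y hy hya), hd,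
        abs_of_nonpos (by linarith)]
      ring
    · rw [dg_comm, hcross _ (hF.mem_uIcc y ⟨hy.1, hya⟩) _ (hG.mem_uIcc _ (hGmem x hx hxa)),
        hF.apply_eq y ⟨hy.1, hya⟩, hG.apply_eq _ (hGmem x hx hxa), hd,
        abs_of_nonneg (by linarith)]
      ring
    · rw [hG.dg_eq _ (hGmem x hx hxa) _ (hGmem y hy hya), abs_sub_comm]
      ring_nf
  · simpa only [if_pos ha] using hF.dg_start
  · split_ifs with hda
    · have hd_mem : dg g s t ∈ Icc 0 a := ⟨by rw [hd]; positivity, hda⟩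
      rw [hcross _ (hF.mem_uIcc _ hd_mem) _ left_mem_uIcc, hF.apply_eq _ hd_mem]
      linarith
    · simpa only [sub_self] using hG.dg_start

theorem unique_isometric_arc_general
    (g : ℝ → ℝ) (hcont : ContinuousOn g (Set.Icc 0 1))
    (T : Type*) [MetricSpace T] (p : Set.Icc (0:ℝ) 1 → T)
    (hsurj : Function.Surjective p)
    (hdist : ∀ s t : Set.Icc (0:ℝ) 1, dist (p s) (p t) = dg g s t)
    (a b : T) :
    ∃! f : Set.Icc (0:ℝ) (dist a b) → T,
      (∀ x y : Set.Icc (0:ℝ) (dist a b), dist (f x) (f y) = |(x : ℝ) - (y : ℝ)|) ∧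
      f ⟨0, le_rfl, dist_nonneg⟩ = a ∧ f ⟨dist a b, dist_nonneg, le_rfl⟩ = b := by
  have h4 : FourPointCondition T := .of_dg hcont hsurj hdist
  obtain ⟨s, rfl⟩ := hsurj a
  obtain ⟨t, rfl⟩ := hsurj b
  have hst : uIcc (s : ℝ) t ⊆ Icc 0 1 := uIcc_subset_Icc s.2 t.2
  obtain ⟨F, hFmem, hFdg, hF₀, hF₁⟩ := exists_dg_isometric_arc (hcont.mono hst)
  have hdom : ∀ x : Icc (0:ℝ) (dist (p s) (p t)), (x : ℝ) ∈ Icc 0 (dg g s t) :=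
    fun x => hdist s t ▸ x.2
  let f (x : Icc (0:ℝ) (dist (p s) (p t))) : T := p ⟨F x, hst (hFmem x (hdom x))⟩
  have hf : ∀ x y, dist (f x) (f y) = |(x : ℝ) - y| := fun x y =>
    (hdist _ _).trans (hFdg x (hdom x) y (hdom y))
  have hf₀ : f ⟨0, le_rfl, dist_nonneg⟩ = p s := dist_eq_zero.1 ((hdist _ _).trans hF₀)
  have hf₁ : f ⟨dist (p s) (p t), dist_nonneg, le_rfl⟩ = p t :=
    dist_eq_zero.1 <| (hdist _ _).trans <| by
      show dg g (F (dist (p s) (p t))) t = 0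
      rw [hdist]
      exact hF₁
  exact ⟨f, ⟨hf, hf₀, hf₁⟩,
    fun f' ⟨hf', hf'₀, hf'₁⟩ => h4.isometric_arc_unique hf' hf'₀ hf'₁ hf hf₀ hf₁⟩

/-- In the tree `T_g` (a metric space `T` with surjection `p : [0,1] → T` realizing the
distances `d_g`), for any two points `a,b` there is a unique isometric map
`f : [0, d(a,b)] → T` with `f 0 = a` and `f (d(a,b)) = b`. -/
theorem unique_isometric_arc
    (g : ℝ → ℝ) (hcont : ContinuousOn g (Set.Icc 0 1))
    (hnonneg : ∀ x ∈ Set.Icc (0:ℝ) 1, 0 ≤ g x)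
    (h0 : g 0 = 0) (h1 : g 1 = 0)
    (T : Type*) [MetricSpace T] (p : Set.Icc (0:ℝ) 1 → T)
    (hsurj : Function.Surjective p)
    (hdist : ∀ s t : Set.Icc (0:ℝ) 1, dist (p s) (p t) = dg g s t)
    (a b : T) :
    ∃! f : Set.Icc (0:ℝ) (dist a b) → T,
      (∀ x y : Set.Icc (0:ℝ) (dist a b), dist (f x) (f y) = |(x : ℝ) - (y : ℝ)|) ∧
      f ⟨0, le_rfl, dist_nonneg⟩ = a ∧ f ⟨dist a b, dist_nonneg, le_rfl⟩ = b :=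
  unique_isometric_arc_general g hcont T p hsurj hdist a b
end

section
/- Let g, g' : [0,1] → ℝ be continuous with g ≥ 0, g' ≥ 0 and g(0) = g(1) = g'(0) = g'(1) = 0. Then the Gromov–Hausdorff distance between the compact metric spaces (T_g, d_g) and (T_{g'}, d_{g'}) satisfies d_GH(T_g, T_{g'}) ≤ 2·sup_{t ∈ [0,1]} |g(t) − g'(t)|. In particular the map g ↦ T_g is continuous with respect to the Gromov–Hausdorff distance when continuous functions are equipped with the supremum distance. -/
/-- If `T` and `T'` are the trees coded by `g` and `g'` (metric spaces with surjections
`p`, `p'` from `[0,1]` realizing the distances `d_g`, `d_{g'}`), then the Gromov–Hausdorff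
distance between `T` and `T'` is bounded by `2 ‖g - g'‖_∞`; in particular `g ↦ T_g` is
continuous for the Gromov–Hausdorff distance. -/
theorem ghDist_tree_le
    (g g' : ℝ → ℝ)
    (hcont : ContinuousOn g (Set.Icc 0 1)) (hcont' : ContinuousOn g' (Set.Icc 0 1))
    (hnonneg : ∀ x ∈ Set.Icc (0:ℝ) 1, 0 ≤ g x)
    (hnonneg' : ∀ x ∈ Set.Icc (0:ℝ) 1, 0 ≤ g' x)
    (h0 : g 0 = 0) (h1 : g 1 = 0) (h0' : g' 0 = 0) (h1' : g' 1 = 0)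
    (T : Type*) [MetricSpace T] [Nonempty T] [CompactSpace T]
    (T' : Type*) [MetricSpace T'] [Nonempty T'] [CompactSpace T']
    (p : Set.Icc (0:ℝ) 1 → T) (p' : Set.Icc (0:ℝ) 1 → T')
    (hsurj : Function.Surjective p) (hsurj' : Function.Surjective p')
    (hdist : ∀ s t : Set.Icc (0:ℝ) 1, dist (p s) (p t) = dg g s t)
    (hdist' : ∀ s t : Set.Icc (0:ℝ) 1, dist (p' s) (p' t) = dg g' s t) :
    GromovHausdorff.ghDist T T' ≤ 2 * sSup ((fun t => |g t - g' t|) '' Set.Icc 0 1) := by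
  set ε0 : ℝ := sSup ((fun t => |g t - g' t|) '' Set.Icc 0 1) with hε0def
  -- sup bound on |g - g'| over [0,1]
  have hgg' : ContinuousOn (fun t => |g t - g' t|) (Set.Icc (0:ℝ) 1) :=
    (hcont.sub hcont').abs
  have hbdd : BddAbove ((fun t => |g t - g' t|) '' Set.Icc (0:ℝ) 1) :=
    (isCompact_Icc.image_of_continuousOn hgg').bddAbove
  have hbd : ∀ r ∈ Set.Icc (0:ℝ) 1, |g r - g' r| ≤ ε0 := fun r hr =>
    le_csSup hbdd (Set.mem_image_of_mem _ hr)
  have hε0 : 0 ≤ ε0 := le_trans (abs_nonneg _) (hbd 0 (by norm_num))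
  -- bound on the difference of the minima
  have hmg : ∀ s t : Set.Icc (0:ℝ) 1, |mg g s t - mg g' s t| ≤ ε0 := by
    intro s t
    set I : Set ℝ := Set.Icc (min (s:ℝ) t) (max (s:ℝ) t) with hI
    have hIsub : I ⊆ Set.Icc (0:ℝ) 1 := by
      apply Set.Icc_subset_Icc
      · exact le_min s.2.1 t.2.1
      · exact max_le s.2.2 t.2.2
    have hIne : I.Nonempty := Set.nonempty_Icc.2 min_le_max
    have key : ∀ f f' : ℝ → ℝ, ContinuousOn f (Set.Icc 0 1) →
        (∀ r ∈ I, f r ≤ f' r + ε0) → sInf (f '' I) ≤ sInf (f' '' I) + ε0 := by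
      intro f f' hf hle
      have hbb : BddBelow (f '' I) :=
        ((isCompact_Icc.image_of_continuousOn (hf.mono hIsub))).bddBelow
      have : sInf (f '' I) - ε0 ≤ sInf (f' '' I) := by
        apply le_csInf (hIne.image _)
        rintro y ⟨r, hr, rfl⟩
        have h1 : sInf (f '' I) ≤ f r := csInf_le hbb (Set.mem_image_of_mem _ hr)
        have h2 := hle r hr
        linarith
      linarith
    have h1 : mg g s t ≤ mg g' s t + ε0 := by
      apply key g g' hcont
      intro r hr
      have := abs_le.1 (hbd r (hIsub hr))
      linarith [this.2]
    have h2 : mg g' s t ≤ mg g s t + ε0 := by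
      apply key g' g hcont'
      intro r hr
      have := abs_le.1 (hbd r (hIsub hr))
      linarith [this.1]
    rw [abs_le]
    constructor <;> [skip; skip] <;> simp only [mg] at h1 h2 ⊢ <;> linarith
  -- bound on the difference of the pseudo-distances
  have hdg : ∀ s t : Set.Icc (0:ℝ) 1, |dg g s t - dg g' s t| ≤ 4 * ε0 := by
    intro s t
    have h1 := abs_le.1 (hbd s s.2)
    have h2 := abs_le.1 (hbd t t.2)
    have h3 := abs_le.1 (hmg s t)
    rw [abs_le]
    unfold dg
    constructor <;> linarith [h1.1, h1.2, h2.1, h2.2, h3.1, h3.2]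
  -- main argument: glue `T` and `T'` along the correspondence `t ↦ (p t, p' t)`
  have hne : Nonempty (Set.Icc (0:ℝ) 1) := (Set.nonempty_Icc.2 zero_le_one).to_subtype
  refine le_of_forall_pos_le_add fun δ δ0 => ?_
  have Hglue : ∀ q r : Set.Icc (0:ℝ) 1,
      |dist (p q) (p r) - dist (p' q) (p' r)| ≤ 2 * (2 * ε0 + δ / 2) := by
    intro q r
    rw [hdist, hdist']
    calc |dg g q r - dg g' q r| ≤ 4 * ε0 := hdg q r
      _ ≤ 2 * (2 * ε0 + δ / 2) := by linarith
  letI : MetricSpace (T ⊕ T') := Metric.glueMetricApprox p p' (2 * ε0 + δ / 2)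
    (by linarith) Hglue
  let Fl := @Sum.inl T T'
  let Fr := @Sum.inr T T'
  have Il : Isometry Fl := Isometry.of_dist_eq fun x y => rfl
  have Ir : Isometry Fr := Isometry.of_dist_eq fun x y => rfl
  have hGH : GromovHausdorff.ghDist T T' ≤
      Metric.hausdorffDist (Set.range Fl) (Set.range Fr) :=
    GromovHausdorff.ghDist_le_hausdorffDist Il Ir
  have hHaus : Metric.hausdorffDist (Set.range Fl) (Set.range Fr) ≤ 2 * ε0 + δ / 2 := by
    apply Metric.hausdorffDist_le_of_mem_dist (by linarith)
    · rintro x ⟨a, rfl⟩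
      obtain ⟨t, rfl⟩ := hsurj a
      exact ⟨Fr (p' t), ⟨p' t, rfl⟩,
        le_of_eq (Metric.glueDist_glued_points p p' (2 * ε0 + δ / 2) t)⟩
    · rintro x ⟨b, rfl⟩
      obtain ⟨t, rfl⟩ := hsurj' b
      refine ⟨Fl (p t), ⟨p t, rfl⟩, ?_⟩
      rw [dist_comm]
      exact le_of_eq (Metric.glueDist_glued_points p p' (2 * ε0 + δ / 2) t)
  calc GromovHausdorff.ghDist T T' ≤ 2 * ε0 + δ / 2 := hGH.trans hHaus
    _ ≤ 2 * ε0 + δ := by linarith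
end

section
/- Let Z : [0,1] → ℝ be continuous with Z(0) = Z(1), set Z_* := min_{[0,1]} Z, and assume Z attains its minimum at a unique point s_* ∈ [0,1]. Let t, t' ∈ [0,1] with Z(t) > Z_* and Z(t') > Z_*. Then there exists ε > 0 with ε ≤ min(Z(t), Z(t')) − Z_* such that for every u ∈ [0, ε], γ_t(Z(t) − Z_* − u) = γ_{t'}(Z(t') − Z_* − u); that is, any two simple geodesics merge before reaching their common endpoint s_*. -/
/-- The cyclic interval `[s,t]` in `[0,1]`. -/
def cyclInt (s t : ℝ) : Set ℝ :=
  if s ≤ t then Set.Icc s t else Set.Icc s 1 ∪ Set.Icc 0 t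

/-- `D°(s,t) = Z(s) + Z(t) - 2 max( min_{[s,t]} Z, min_{[t,s]} Z )`. -/
noncomputable def Dcirc (Z : ℝ → ℝ) (s t : ℝ) : ℝ :=
  Z s + Z t - 2 * max (sInf (Z '' cyclInt s t)) (sInf (Z '' cyclInt t s))

/-- `D(s,t)`, the infimum over finite chains in `[0,1]` of sums of `D°`-increments. -/
noncomputable def Dmap (Z : ℝ → ℝ) (s t : ℝ) : ℝ :=
  sInf {x | ∃ k : ℕ, 1 ≤ k ∧ ∃ f : ℕ → ℝ,
    (∀ i ≤ k, f i ∈ Set.Icc (0:ℝ) 1) ∧ f 0 = s ∧ f k = t ∧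
    x = ∑ i ∈ Finset.range k, Dcirc Z (f i) (f (i + 1))}

/-- First candidate set in the definition of the simple geodesic:
points of `[t,1]` where `Z` equals `Z t - r`. -/
def gammaSetR (Z : ℝ → ℝ) (t r : ℝ) : Set ℝ :=
  {s | s ∈ Set.Icc t 1 ∧ Z s = Z t - r}

/-- Second candidate set: points of `[0,t]` where `Z` equals `Z t - r`. -/
def gammaSetL (Z : ℝ → ℝ) (t r : ℝ) : Set ℝ :=
  {s | s ∈ Set.Icc 0 t ∧ Z s = Z t - r}

open Classical in
/-- The simple geodesic `γ_t(r)`. -/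
noncomputable def gammaP (Z : ℝ → ℝ) (t r : ℝ) : ℝ :=
  if (gammaSetR Z t r).Nonempty then sInf (gammaSetR Z t r) else sInf (gammaSetL Z t r)


/-!
Let `m = min Z`. Since the minimum is attained only at `s_*`, a geodesic start `t ≠ s_*` is
separated from `s_*` by a compact interval (`[0,t]` or `[t,1]`) on which `Z` stays above some
`a > m`. For levels `ℓ < a` the level set `{Z = ℓ}` therefore lies entirely on the far side of
`t`, and the recipe defining `γ_t` (first hit to the right of `t`, else first hit from `0`) just
picks the smallest point of `{Z = ℓ}`, whatever `t` is. So `γ_t` and `γ_{t'}` agree at all levels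
below both thresholds.
-/

open Set

def levelSet (Z : ℝ → ℝ) (ℓ : ℝ) : Set ℝ :=
  {s | s ∈ Icc 0 1 ∧ Z s = ℓ}

section gammaP

variable {Z : ℝ → ℝ} {τ r : ℝ}

theorem gammaSetR_eq_levelSet (hτ : 0 ≤ τ) (h : ∀ s ∈ levelSet Z (Z τ - r), τ ≤ s) :
    gammaSetR Z τ r = levelSet Z (Z τ - r) :=
  Subset.antisymm (fun _ ⟨hs, hZs⟩ => ⟨⟨hτ.trans hs.1, hs.2⟩, hZs⟩)
    fun s hs => ⟨⟨h s hs, hs.1.2⟩, hs.2⟩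

theorem gammaSetL_subset_levelSet (hτ : τ ≤ 1) : gammaSetL Z τ r ⊆ levelSet Z (Z τ - r) :=
  fun _ ⟨hs, hZs⟩ => ⟨⟨hs.1, hs.2.trans hτ⟩, hZs⟩

theorem gammaP_eq_sInf_levelSet_of_le (hτ : τ ∈ Icc 0 1)
    (h : ∀ s ∈ levelSet Z (Z τ - r), τ ≤ s) :
    gammaP Z τ r = sInf (levelSet Z (Z τ - r)) := by
  have hR := gammaSetR_eq_levelSet hτ.1 h
  by_cases hne : (gammaSetR Z τ r).Nonempty
  · rw [gammaP, if_pos hne, hR]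
  · have hempty : levelSet Z (Z τ - r) = ∅ := by
      rwa [← hR, ← not_nonempty_iff_eq_empty]
    have hL : gammaSetL Z τ r = ∅ :=
      subset_empty_iff.mp (hempty ▸ gammaSetL_subset_levelSet hτ.2)
    rw [gammaP, if_neg hne, hempty, hL]

theorem gammaP_eq_sInf_levelSet_of_lt (hτ : τ ∈ Icc 0 1)
    (h : ∀ s ∈ levelSet Z (Z τ - r), s < τ) :
    gammaP Z τ r = sInf (levelSet Z (Z τ - r)) := by
  have hR : ¬(gammaSetR Z τ r).Nonempty := fun ⟨_, hs, hZs⟩ =>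
    (h _ ⟨⟨hτ.1.trans hs.1, hs.2⟩, hZs⟩).not_ge hs.1
  have hL : gammaSetL Z τ r = levelSet Z (Z τ - r) :=
    Subset.antisymm (gammaSetL_subset_levelSet hτ.2)
      fun s hs => ⟨⟨hs.1.1, (h s hs).le⟩, hs.2⟩
  rw [gammaP, if_neg hR, hL]

end gammaP

theorem levelSet_subset_compl_of_lt {Z : ℝ → ℝ} {K : Set ℝ} {a ℓ : ℝ}
    (hK : ∀ s ∈ K, a ≤ Z s) (hℓ : ℓ < a) : levelSet Z ℓ ⊆ Kᶜ :=
  fun s hs hsK => (hK s hsK).not_gt (hs.2 ▸ hℓ)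

theorem exists_gammaP_eq_sInf_levelSet {Z : ℝ → ℝ} {c sstar τ : ℝ}
    (hcont : ContinuousOn Z (Icc 0 1)) (hgap : ∀ s ∈ Icc 0 1, s ≠ sstar → c < Z s)
    (hτ : τ ∈ Icc 0 1) (hτs : τ ≠ sstar) :
    ∃ a > c, ∀ r, Z τ - r < a → gammaP Z τ r = sInf (levelSet Z (Z τ - r)) := by
  rcases hτs.lt_or_gt with hlt | hgt
  · obtain ⟨a, hca, ha⟩ := isCompact_Icc.exists_forall_le'
      (hcont.mono (Icc_subset_Icc_right hτ.2))
      fun s hs => hgap s ⟨hs.1, hs.2.trans hτ.2⟩ (hs.2.trans_lt hlt).ne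
    refine ⟨a, hca, fun r hr => gammaP_eq_sInf_levelSet_of_le hτ fun s hs => ?_⟩
    by_contra! hsτ
    exact levelSet_subset_compl_of_lt ha hr hs ⟨hs.1.1, hsτ.le⟩
  · obtain ⟨a, hca, ha⟩ := isCompact_Icc.exists_forall_le'
      (hcont.mono (Icc_subset_Icc_left hτ.1))
      fun s hs => hgap s ⟨hτ.1.trans hs.1, hs.2⟩ (hgt.trans_le hs.1).ne'
    refine ⟨a, hca, fun r hr => gammaP_eq_sInf_levelSet_of_lt hτ fun s hs => ?_⟩
    by_contra! hτs
    exact levelSet_subset_compl_of_lt ha hr hs ⟨hτs, hs.1.2⟩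

theorem simple_geodesics_merge_general
    (Z : ℝ → ℝ) (hcont : ContinuousOn Z (Set.Icc 0 1))
    (sstar : ℝ)
    (hmin : Z sstar = sInf (Z '' Set.Icc (0:ℝ) 1))
    (huniq : ∀ s ∈ Set.Icc (0:ℝ) 1, Z s = sInf (Z '' Set.Icc (0:ℝ) 1) → s = sstar)
    (t t' : ℝ) (ht : t ∈ Set.Icc (0:ℝ) 1) (ht' : t' ∈ Set.Icc (0:ℝ) 1)
    (hZt : sInf (Z '' Set.Icc (0:ℝ) 1) < Z t)
    (hZt' : sInf (Z '' Set.Icc (0:ℝ) 1) < Z t') :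
    ∃ ε > 0, ε ≤ min (Z t) (Z t') - sInf (Z '' Set.Icc (0:ℝ) 1) ∧
      ∀ u ∈ Set.Icc (0:ℝ) ε,
        gammaP Z t (Z t - sInf (Z '' Set.Icc (0:ℝ) 1) - u) =
          gammaP Z t' (Z t' - sInf (Z '' Set.Icc (0:ℝ) 1) - u) := by
  set m := sInf (Z '' Icc (0:ℝ) 1)
  have hbdd : BddBelow (Z '' Icc (0:ℝ) 1) := (isCompact_Icc.image_of_continuousOn hcont).bddBelow
  have hgap : ∀ s ∈ Icc (0:ℝ) 1, s ≠ sstar → m < Z s := fun s hs hne =>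
    (csInf_le hbdd (mem_image_of_mem Z hs)).lt_of_ne fun h => hne (huniq s hs h.symm)
  obtain ⟨a, hma, ha⟩ := exists_gammaP_eq_sInf_levelSet hcont hgap ht
    (by rintro rfl; exact hZt.ne' hmin)
  obtain ⟨a', hma', ha'⟩ := exists_gammaP_eq_sInf_levelSet hcont hgap ht'
    (by rintro rfl; exact hZt'.ne' hmin)
  have hδ : 0 < min (a - m) (a' - m) := lt_min (sub_pos.2 hma) (sub_pos.2 hma')
  have hη : 0 < min (Z t) (Z t') - m := sub_pos.2 (lt_min hZt hZt')
  refine ⟨min (min (a - m) (a' - m)) (min (Z t) (Z t') - m) / 2, half_pos (lt_min hδ hη),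
    by linarith [min_le_right (min (a - m) (a' - m)) (min (Z t) (Z t') - m)], fun u hu => ?_⟩
  have hu_lt : u < min (a - m) (a' - m) := by
    linarith [hu.2, min_le_left (min (a - m) (a' - m)) (min (Z t) (Z t') - m)]
  have hlevel : ∀ z, z - (z - m - u) = m + u := fun z => by ring
  rw [ha _ (by rw [hlevel]; linarith [min_le_left (a - m) (a' - m)]),
    ha' _ (by rw [hlevel]; linarith [min_le_right (a - m) (a' - m)]), hlevel, hlevel]

theorem simple_geodesics_merge
    (Z : ℝ → ℝ) (hcont : ContinuousOn Z (Set.Icc 0 1)) (hZ : Z 0 = Z 1)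
    (sstar : ℝ) (hsstar : sstar ∈ Set.Icc (0:ℝ) 1)
    (hmin : Z sstar = sInf (Z '' Set.Icc (0:ℝ) 1))
    (huniq : ∀ s ∈ Set.Icc (0:ℝ) 1, Z s = sInf (Z '' Set.Icc (0:ℝ) 1) → s = sstar)
    (t t' : ℝ) (ht : t ∈ Set.Icc (0:ℝ) 1) (ht' : t' ∈ Set.Icc (0:ℝ) 1)
    (hZt : sInf (Z '' Set.Icc (0:ℝ) 1) < Z t)
    (hZt' : sInf (Z '' Set.Icc (0:ℝ) 1) < Z t') :
    ∃ ε > 0, ε ≤ min (Z t) (Z t') - sInf (Z '' Set.Icc (0:ℝ) 1) ∧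
      ∀ u ∈ Set.Icc (0:ℝ) ε,
        gammaP Z t (Z t - sInf (Z '' Set.Icc (0:ℝ) 1) - u) =
          gammaP Z t' (Z t' - sInf (Z '' Set.Icc (0:ℝ) 1) - u) :=
  simple_geodesics_merge_general Z hcont sstar hmin huniq t t' ht ht' hZt hZt'
end
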